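/- arXiv:0807.2388 — 9 statements merged into one kernel-verified Lean document; each statement's English description precedes it below -/
import Mathlib

section
/- For every j ≥ 1, n_j ≥ 2^(j+2) · m_{j+2}, and for every j ≥ 2, n_j ≥ j · p_j, where p_j = n_1 · n_2 · ⋯ · n_{j-1}. -/
/-!
Both bounds are driven by the growth `n (j + 1) ≥ (4 n j) ^ 5 ≥ n j ^ 3`, valid because every `m j`
with `j ≥ 2` is positive. For the first bound, `2 ^ (j + 3) m (j + 3) = (2 m (j + 2)) (2 ^ (j + 2) m (j + 2))`
is a product of two numbers at most `n j`. For the second, `p (j + 1) = p j · n j`, so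
`(j + 1) p (j + 1) ≤ n j · n j · n j`, using `j + 1 ≤ n j` (from the first bound) and `p j ≤ n j`
(the induction hypothesis).
-/

open Finset

lemma pos_of_eq_sq_pred {m : ℕ → ℕ} (h2 : 0 < m 2) (hrec : ∀ j, 3 ≤ j → m j = m (j - 1) ^ 2) :
    ∀ j, 2 ≤ j → 0 < m j := by
  intro j hj
  induction j, hj using Nat.le_induction with
  | base => exact h2
  | succ j hj ih => rw [hrec (j + 1) (by omega), Nat.add_sub_cancel]; positivity

lemma cube_le_of_four_mul_pow_five_mul_le {N c n' : ℕ} (hc : 0 < c) (h : (4 * N) ^ 5 * c ≤ n') :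
    N ^ 3 ≤ n' :=
  calc N ^ 3 ≤ (4 * N) ^ 3 := by gcongr; omega
    _ ≤ (4 * N) ^ 5 := by
        rcases N.eq_zero_or_pos with rfl | hN
        · simp
        · exact Nat.pow_le_pow_right (by omega) (by norm_num)
    _ ≤ (4 * N) ^ 5 * c := Nat.le_mul_of_pos_right _ hc
    _ ≤ n' := h

section

variable {m n : ℕ → ℕ}

lemma two_pow_mul_le_of_cube_le (hn1 : 2 ^ 3 * m 3 ≤ n 1)
    (hmrec : ∀ j, 3 ≤ j → m j = m (j - 1) ^ 2) (hgrowth : ∀ j, 1 ≤ j → n j ^ 3 ≤ n (j + 1)) :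
    ∀ j, 1 ≤ j → 2 ^ (j + 2) * m (j + 2) ≤ n j := by
  intro j hj
  induction j, hj using Nat.le_induction with
  | base => exact hn1
  | succ j hj ih =>
    have hsq : m (j + 3) = m (j + 2) ^ 2 := hmrec (j + 3) (by omega)
    have h2m : 2 * m (j + 2) ≤ n j :=
      le_trans (Nat.mul_le_mul_right _ (Nat.le_self_pow (by omega) 2)) ih
    calc 2 ^ (j + 1 + 2) * m (j + 1 + 2) = 2 * m (j + 2) * (2 ^ (j + 2) * m (j + 2)) := by
          rw [hsq]; ring
      _ ≤ n j * n j := Nat.mul_le_mul h2m ih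
      _ ≤ n j ^ 3 := by
          rcases (n j).eq_zero_or_pos with h | h
          · simp [h]
          · rw [← sq]; exact Nat.pow_le_pow_right h (by norm_num)
      _ ≤ n (j + 1) := hgrowth j hj

lemma mul_prod_le_of_cube_le (hlarge : ∀ j, 1 ≤ j → j + 1 ≤ n j)
    (hgrowth : ∀ j, 1 ≤ j → n j ^ 3 ≤ n (j + 1)) :
    ∀ j, 1 ≤ j → j * ∏ i ∈ Icc 1 (j - 1), n i ≤ n j := by
  intro j hj
  induction j, hj using Nat.le_induction with
  | base => simpa using (hlarge 1 le_rfl).trans' (by omega)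
  | succ j hj ih =>
    have hprod : ∏ i ∈ Icc 1 (j + 1 - 1), n i = (∏ i ∈ Icc 1 (j - 1), n i) * n j := by
      obtain ⟨k, rfl⟩ : ∃ k, j = k + 1 := ⟨j - 1, by omega⟩
      simp [prod_Icc_succ_top]
    have hprod_le : ∏ i ∈ Icc 1 (j - 1), n i ≤ n j := le_trans (Nat.le_mul_of_pos_left _ hj) ih
    calc (j + 1) * ∏ i ∈ Icc 1 (j + 1 - 1), n i
        = (j + 1) * ((∏ i ∈ Icc 1 (j - 1), n i) * n j) := by rw [hprod]
      _ ≤ n j * (n j * n j) := by gcongr; exact hlarge j hj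
      _ = n j ^ 3 := by ring
      _ ≤ n (j + 1) := hgrowth j hj

end

theorem stmt1_general (m n : ℕ → ℕ) (hm2 : m 2 = 2)
    (hmrec : ∀ j, 3 ≤ j → m j = (m (j - 1)) ^ 2)
    (hn1 : 2 ^ 3 * m 3 ≤ n 1)
    (hnrec : ∀ j, 2 ≤ j → (4 * n (j - 1)) ^ 5 * m j ≤ n j)
    (p : ℕ → ℕ) (hp : ∀ j, p j = ∏ i ∈ Finset.Icc 1 (j - 1), n i) :
    (∀ j, 1 ≤ j → 2 ^ (j + 2) * m (j + 2) ≤ n j) ∧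
    (∀ j, 2 ≤ j → j * p j ≤ n j) := by
  have hmpos := pos_of_eq_sq_pred (by omega) hmrec
  have hgrowth : ∀ j, 1 ≤ j → n j ^ 3 ≤ n (j + 1) := fun j hj =>
    cube_le_of_four_mul_pow_five_mul_le (hmpos (j + 1) (by omega))
      (by simpa using hnrec (j + 1) (by omega))
  have hA := two_pow_mul_le_of_cube_le hn1 hmrec hgrowth
  have hlarge : ∀ j, 1 ≤ j → j + 1 ≤ n j := fun j hj =>
    calc j + 1 ≤ 2 ^ (j + 2) := by have := Nat.lt_two_pow_self (n := j + 2); omega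
      _ ≤ 2 ^ (j + 2) * m (j + 2) := Nat.le_mul_of_pos_right _ (hmpos _ (by omega))
      _ ≤ n j := hA j hj
  refine ⟨hA, fun j hj => ?_⟩
  rw [hp]
  exact mul_prod_le_of_cube_le hlarge hgrowth j (by omega)

/-- With `m 1 = m 2 = 2`, `m j = (m (j-1))^2` for `j ≥ 3`, and `n`
satisfying `n 1 ≥ 2^3 * m 3` and `n j ≥ (4 * n (j-1))^5 * m j` for `j ≥ 2`,
we have `n j ≥ 2^(j+2) * m (j+2)` for every `j ≥ 1`, and `n j ≥ j * p j` for
every `j ≥ 2`, where `p j = n 1 * n 2 * ⋯ * n (j-1)`. -/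
theorem stmt1 (m n : ℕ → ℕ) (hm1 : m 1 = 2) (hm2 : m 2 = 2)
    (hmrec : ∀ j, 3 ≤ j → m j = (m (j - 1)) ^ 2)
    (hn1 : 2 ^ 3 * m 3 ≤ n 1)
    (hnrec : ∀ j, 2 ≤ j → (4 * n (j - 1)) ^ 5 * m j ≤ n j)
    (p : ℕ → ℕ) (hp : ∀ j, p j = ∏ i ∈ Finset.Icc 1 (j - 1), n i) :
    (∀ j, 1 ≤ j → 2 ^ (j + 2) * m (j + 2) ≤ n j) ∧
    (∀ j, 2 ≤ j → j * p j ≤ n j) :=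
  stmt1_general m n hm2 hmrec hn1 hnrec p hp
end

section
/- Every element f of the norming set K satisfies ‖f‖_q ≤ 1 in the ℓ_q norm, where q = max_{1 ≤ i ≤ k} log_{m_i}(n_i), provided each m_i ≥ 2 and n_i ≥ m_i. -/
/-!
Write `S_q(f) = ∑ₗ |f l|^q`. Both `±e_r*` have `S_q = 1`, and if `f_1, …, f_d` have disjoint
supports then `S_q((1/m)(f_1 + ⋯ + f_d)) = m^{-q} ∑ₜ S_q(f_t) ≤ d / m^q`, which is at most `1`
as soon as `d ≤ n ≤ m^q`, i.e. `log_m n ≤ q`. So `S_q ≤ 1` on `K` by induction.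
-/

/-- The minimal subset of `c₀₀(ℕ)` containing `{±e_r*}` and closed, for every
`i` with `1 ≤ i ≤ k`, under the operation sending any family `f_1, …, f_d`
(`d ≤ n i`) of its elements with pairwise disjoint supports to
`(1/m i)(f_1 + ⋯ + f_d)`. -/
inductive KM (m n : ℕ → ℕ) (k : ℕ) : (ℕ →₀ ℝ) → Prop
  | pos (r : ℕ) : KM m n k (Finsupp.single r 1)
  | neg (r : ℕ) : KM m n k (-Finsupp.single r 1)
  | op (i d : ℕ) (hi1 : 1 ≤ i) (hik : i ≤ k) (f : Fin d → ℕ →₀ ℝ) (hd : d ≤ n i)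
      (hmem : ∀ t, KM m n k (f t))
      (hdisj : ∀ t t' : Fin d, t ≠ t' → Disjoint (f t).support (f t').support) :
      KM m n k (((m i : ℝ))⁻¹ • ∑ t, f t)

open Finset

/-- This is `‖f‖_q ^ q` when `0 < q`. -/
noncomputable def sumAbsRpow {α : Type*} (q : ℝ) (f : α →₀ ℝ) : ℝ :=
  ∑ l ∈ f.support, |f l| ^ q

namespace sumAbsRpow

variable {α : Type*} (q : ℝ)

lemma nonneg (f : α →₀ ℝ) : 0 ≤ sumAbsRpow q f :=
  sum_nonneg fun _ _ => Real.rpow_nonneg (abs_nonneg _) q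

@[simp]
lemma neg (f : α →₀ ℝ) : sumAbsRpow q (-f) = sumAbsRpow q f := by
  simp [sumAbsRpow]

@[simp]
lemma single_one (r : α) : sumAbsRpow q (Finsupp.single r (1 : ℝ)) = 1 := by
  simp [sumAbsRpow]

lemma smul {c : ℝ} (hc : c ≠ 0) (f : α →₀ ℝ) :
    sumAbsRpow q (c • f) = |c| ^ q * sumAbsRpow q f := by
  simp only [sumAbsRpow, Finsupp.support_smul_eq hc, mul_sum, Finsupp.smul_apply, smul_eq_mul,
    abs_mul, Real.mul_rpow (abs_nonneg c) (abs_nonneg _)]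

lemma sum_of_disjoint {ι : Type*} [DecidableEq α] (s : Finset ι) (f : ι → α →₀ ℝ)
    (hdisj : ∀ t t', t ≠ t' → Disjoint (f t).support (f t').support) :
    sumAbsRpow q (∑ t ∈ s, f t) = ∑ t ∈ s, sumAbsRpow q (f t) := by
  classical
  rw [sumAbsRpow, Finsupp.support_sum_eq_biUnion s hdisj,
    sum_biUnion fun t _ t' _ h => hdisj t t' h]
  refine sum_congr rfl fun t ht => sum_congr rfl fun l hl => ?_
  rw [Finsupp.finsetSum_apply, sum_eq_single_of_mem t ht fun t' _ h =>
    Finsupp.notMem_support_iff.mp (disjoint_left.mp (hdisj t t' h.symm) hl)]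

end sumAbsRpow

lemma sumAbsRpow_le_one_of_KM {m n : ℕ → ℕ} {k : ℕ} {q : ℝ}
    (hm : ∀ i, 1 ≤ i → i ≤ k → 0 < m i)
    (hmn : ∀ i, 1 ≤ i → i ≤ k → (n i : ℝ) ≤ (m i : ℝ) ^ q) {f : ℕ →₀ ℝ} (hf : KM m n k f) :
    sumAbsRpow q f ≤ 1 := by
  induction hf with
  | pos r => simp
  | neg r => simp
  | op i d hi1 hik f hd _ hdisj ih =>
    have hmi : (0 : ℝ) < m i := by exact_mod_cast hm i hi1 hik
    have hmq : (0 : ℝ) < (m i : ℝ) ^ q := Real.rpow_pos_of_pos hmi q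
    rw [sumAbsRpow.smul q (inv_ne_zero hmi.ne'), sumAbsRpow.sum_of_disjoint q _ _ hdisj,
      abs_inv, Nat.abs_cast, Real.inv_rpow hmi.le, inv_mul_le_iff₀ hmq, mul_one]
    calc ∑ t, sumAbsRpow q (f t) ≤ ∑ _t : Fin d, (1 : ℝ) := sum_le_sum fun t _ => ih t
      _ = d := by simp
      _ ≤ n i := by exact_mod_cast hd
      _ ≤ (m i : ℝ) ^ q := hmn i hi1 hik

/-- Every element `f` of the norming set `K = KM m n k` satisfies
`‖f‖_q ≤ 1` in the `ℓ_q` norm, where `q = max_{1 ≤ i ≤ k} log_{m i} (n i)`,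
provided each `m i ≥ 2` and `n i ≥ m i`. -/
theorem stmt3 (m n : ℕ → ℕ) (k : ℕ) (hk : 1 ≤ k)
    (hm : ∀ i, 1 ≤ i → i ≤ k → 2 ≤ m i)
    (hn : ∀ i, 1 ≤ i → i ≤ k → m i ≤ n i)
    (q : ℝ)
    (hq : q = (Finset.Icc 1 k).sup' (Finset.nonempty_Icc.mpr hk)
        (fun i => Real.logb (m i) (n i))) :
    ∀ f : ℕ →₀ ℝ, KM m n k f →
      (∑ l ∈ f.support, |f l| ^ q) ^ (1 / q) ≤ 1 := by
  have one_lt_m : ∀ i, 1 ≤ i → i ≤ k → (1 : ℝ) < m i := fun i hi1 hik => by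
    exact_mod_cast hm i hi1 hik
  have m_le_n : ∀ i, 1 ≤ i → i ≤ k → (m i : ℝ) ≤ n i := fun i hi1 hik => by
    exact_mod_cast hn i hi1 hik
  have logb_le_q : ∀ i, 1 ≤ i → i ≤ k → Real.logb (m i) (n i) ≤ q := fun i hi1 hik =>
    hq ▸ le_sup' (fun i => Real.logb (m i) (n i)) (mem_Icc.mpr ⟨hi1, hik⟩)
  have hq0 : 0 ≤ q := (Real.logb_nonneg (one_lt_m 1 le_rfl hk)
    ((one_lt_m 1 le_rfl hk).le.trans (m_le_n 1 le_rfl hk))).trans (logb_le_q 1 le_rfl hk)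
  intro f hf
  have hS : sumAbsRpow q f ≤ 1 := by
    refine sumAbsRpow_le_one_of_KM (fun i hi1 hik => by linarith [hm i hi1 hik]) ?_ hf
    intro i hi1 hik
    exact (Real.logb_le_iff_le_rpow (one_lt_m i hi1 hik)
      (by linarith [one_lt_m i hi1 hik, m_le_n i hi1 hik])).mp (logb_le_q i hi1 hik)
  exact Real.rpow_le_one (sumAbsRpow.nonneg q f) hS (by positivity)
end

section
/- For every j ≥ 3, Σ_{k=1}^{j-1} m_{j-k+1} · (n_{j-1} · n_{j-2} · ⋯ · n_{j-k}) ≤ 3 · p_j, where p_j = n_1 · ⋯ · n_{j-1}. -/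
/-!
Substitute `l = j - k`, so that the `l`-th term is `m (l + 1) * n l * ⋯ * n (j - 1)`.
The term `l = 1` equals `m 2 * p j = 2 * p j`. For `l ≥ 2` the growth condition
`2 ^ (l + 1) * m (l + 1) ≤ n (l - 1)` lets the factor `m (l + 1)` be absorbed into the missing
factor `n (l - 1)` of `p j` at the price `2 ^ -(l + 1)`, and these prices sum to less than `1`.
-/

open Finset

theorem sum_Icc_sub_reflect {M : Type*} [AddCommMonoid M] (f : ℕ → M) (N : ℕ) :
    ∑ k ∈ Icc 1 (N - 1), f (N - k) = ∑ k ∈ Icc 1 (N - 1), f k := by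
  refine sum_nbij' (fun k => N - k) (fun k => N - k) ?_ ?_ ?_ ?_ fun k _ => rfl <;>
    intro k hk <;> simp only [mem_Icc] at hk ⊢ <;> omega

theorem sum_le_of_two_pow_succ_mul_le {s : Finset ℕ} {a : ℕ → ℕ} {P : ℕ}
    (h : ∀ l ∈ s, 2 ^ (l + 1) * a l ≤ P) : ∑ l ∈ s, a l ≤ P := by
  have hterm : ∀ l ∈ s, (a l : ℝ) ≤ (1 / 2) ^ (l + 1) * P := fun l hl => by
    rw [one_div_pow, one_div_mul_eq_div, le_div_iff₀' (by positivity)]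
    exact_mod_cast h l hl
  have hgeom : ∑ l ∈ s, (1 / 2 : ℝ) ^ (l + 1) ≤ 1 := by
    have := (summable_geometric_two.sum_le_tsum s fun _ _ => by positivity).trans_eq
      tsum_geometric_two
    simp only [pow_succ, ← sum_mul]
    linarith
  suffices (∑ l ∈ s, a l : ℝ) ≤ P by exact_mod_cast this
  calc (∑ l ∈ s, a l : ℝ) ≤ ∑ l ∈ s, (1 / 2 : ℝ) ^ (l + 1) * P := sum_le_sum hterm
    _ = (∑ l ∈ s, (1 / 2 : ℝ) ^ (l + 1)) * P := (sum_mul ..).symm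
    _ ≤ P := mul_le_of_le_one_left P.cast_nonneg hgeom

theorem mul_prod_Ioc_le_prod_Icc {f : ℕ → ℕ} {a b c : ℕ} (hab : a ≤ b) (hbc : b ≤ c)
    (hf : ∀ i ∈ Icc a b, 0 < f i) : f b * ∏ i ∈ Ioc b c, f i ≤ ∏ i ∈ Icc a c, f i := by
  have hsplit : Icc a c = Icc a b ∪ Ioc b c :=
    coe_injective (by push_cast; exact (Set.Icc_union_Ioc_eq_Icc hab hbc).symm)
  have hdisj : Disjoint (Icc a b) (Ioc b c) :=
    disjoint_left.2 fun i hi hi' => by simp only [mem_Icc, mem_Ioc] at hi hi'; omega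
  rw [hsplit, prod_union hdisj]
  exact Nat.mul_le_mul_right _ (single_le_prod' hf (right_mem_Icc.2 hab))

theorem pos_of_eq_sq_pred_s5 {m : ℕ → ℕ} (hm2 : 0 < m 2) (hmrec : ∀ j, 3 ≤ j → m j = m (j - 1) ^ 2)
    {j : ℕ} (hj : 2 ≤ j) : 0 < m j := by
  induction j, hj using Nat.le_induction with
  | base => exact hm2
  | succ j hj ih => rw [hmrec (j + 1) (by omega), Nat.add_sub_cancel]; positivity

section

variable {m n : ℕ → ℕ} (hmpos : ∀ j, 2 ≤ j → 0 < m j)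
  (hn : ∀ i, 1 ≤ i → 2 ^ (i + 2) * m (i + 2) ≤ n i)
include hmpos hn

theorem two_pow_succ_mul_tail_le {l j : ℕ} (hl : 2 ≤ l) (hlj : l ≤ j - 1) :
    2 ^ (l + 1) * (m (l + 1) * ∏ i ∈ Icc l (j - 1), n i) ≤ ∏ i ∈ Icc 1 (j - 1), n i := by
  have hnpos : ∀ i ∈ Icc 1 (l - 1), 0 < n i := fun i hi =>
    (Nat.mul_pos (by positivity) (hmpos (i + 2) (by omega))).trans_le (hn i (mem_Icc.1 hi).1)
  have hgrowth : 2 ^ (l + 1) * m (l + 1) ≤ n (l - 1) := by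
    simpa only [show l - 1 + 2 = l + 1 by omega] using hn (l - 1) (by omega)
  have htail : Icc l (j - 1) = Ioc (l - 1) (j - 1) := by
    rw [← Icc_add_one_left_eq_Ioc, Nat.sub_add_cancel (by omega)]
  calc 2 ^ (l + 1) * (m (l + 1) * ∏ i ∈ Icc l (j - 1), n i)
      = 2 ^ (l + 1) * m (l + 1) * ∏ i ∈ Ioc (l - 1) (j - 1), n i := by rw [htail, mul_assoc]
    _ ≤ n (l - 1) * ∏ i ∈ Ioc (l - 1) (j - 1), n i := Nat.mul_le_mul_right _ hgrowth
    _ ≤ ∏ i ∈ Icc 1 (j - 1), n i := mul_prod_Ioc_le_prod_Icc (by omega) (by omega) hnpos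

end

theorem stmt5_general (m n : ℕ → ℕ) (hm2 : m 2 = 2)
    (hmrec : ∀ j, 3 ≤ j → m j = (m (j - 1)) ^ 2)
    (hn : ∀ i, 1 ≤ i → 2 ^ (i + 2) * m (i + 2) ≤ n i)
    (p : ℕ → ℕ) (hp : ∀ j, p j = ∏ i ∈ Finset.Icc 1 (j - 1), n i) :
    ∀ j, 3 ≤ j →
      ∑ k ∈ Finset.Icc 1 (j - 1),
        m (j - k + 1) * ∏ i ∈ Finset.Icc (j - k) (j - 1), n i ≤ 3 * p j := by
  intro j hj
  have hmpos : ∀ j, 2 ≤ j → 0 < m j := fun j => pos_of_eq_sq_pred_s5 (by omega) hmrec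
  have htail : ∑ l ∈ Ioc 1 (j - 1), m (l + 1) * ∏ i ∈ Icc l (j - 1), n i ≤ p j :=
    hp j ▸ sum_le_of_two_pow_succ_mul_le fun l hl =>
      two_pow_succ_mul_tail_le hmpos hn (mem_Ioc.1 hl).1 (mem_Ioc.1 hl).2
  rw [sum_Icc_sub_reflect (fun l => m (l + 1) * ∏ i ∈ Icc l (j - 1), n i),
    Icc_eq_cons_Ioc (by omega), sum_cons, hm2, ← hp]
  omega

/-- With `m 1 = m 2 = 2`, `m j = (m (j-1))^2` for `j ≥ 3`, and
`n i ≥ 2^(i+2) * m (i+2)` for all `i ≥ 1`, for every `j ≥ 3` we have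
`Σ_{k=1}^{j-1} m (j-k+1) * (n (j-1) * n (j-2) * ⋯ * n (j-k)) ≤ 3 * p j`,
where `p j = n 1 * ⋯ * n (j-1)`. -/
theorem stmt5 (m n : ℕ → ℕ) (hm1 : m 1 = 2) (hm2 : m 2 = 2)
    (hmrec : ∀ j, 3 ≤ j → m j = (m (j - 1)) ^ 2)
    (hn : ∀ i, 1 ≤ i → 2 ^ (i + 2) * m (i + 2) ≤ n i)
    (p : ℕ → ℕ) (hp : ∀ j, p j = ∏ i ∈ Finset.Icc 1 (j - 1), n i) :
    ∀ j, 3 ≤ j →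
      ∑ k ∈ Finset.Icc 1 (j - 1),
        m (j - k + 1) * ∏ i ∈ Finset.Icc (j - k) (j - 1), n i ≤ 3 * p j :=
  stmt5_general m n hm2 hmrec hn p hp
end

section
/- Let (z_n) be a sequence in a Banach space Z and C ≥ 1 a constant such that for every s ∈ ℕ and every s ≤ k_1 < k_2 < ⋯ < k_s, ‖z_{k_1} + z_{k_2} + ⋯ + z_{k_s}‖ ≤ C. Then (z_n) converges weakly to 0. -/
open Filter

/-- If `f (z n) ≥ ε` for infinitely many `n`, then summing `s > ‖f‖ C / ε` of those `z n` with
indices `≥ s` gives an admissible sum whose image under `f` exceeds `‖f‖ C`. -/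
theorem eventually_apply_lt_of_norm_sum_le {Z : Type*} [NormedAddCommGroup Z] [NormedSpace ℝ Z]
    {z : ℕ → Z} {C : ℝ} (h : ∀ F : Finset ℕ, (∀ k ∈ F, F.card ≤ k) → ‖∑ k ∈ F, z k‖ ≤ C)
    (f : Z →L[ℝ] ℝ) {ε : ℝ} (hε : 0 < ε) : ∀ᶠ n in atTop, f (z n) < ε := by
  simp_rw [← not_le]
  rw [← not_frequently, Nat.frequently_atTop_iff_infinite]
  intro hT
  obtain ⟨s, hs⟩ := exists_nat_gt (‖f‖ * C / ε)
  obtain ⟨F, hFT, hcard⟩ := (hT.sdiff (Set.finite_Iio s)).exists_subset_card_eq s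
  have hlarge : ∀ k ∈ F, ε ≤ f (z k) := fun k hk => (hFT hk).1
  have hadmissible : ∀ k ∈ F, F.card ≤ k := fun k hk => hcard ▸ not_lt.1 (hFT hk).2
  have hlower : s * ε ≤ f (∑ k ∈ F, z k) := by
    rw [map_sum]
    calc (s : ℝ) * ε = ∑ _k ∈ F, ε := by rw [Finset.sum_const, hcard, nsmul_eq_mul]
      _ ≤ ∑ k ∈ F, f (z k) := Finset.sum_le_sum hlarge
  have hupper : f (∑ k ∈ F, z k) ≤ ‖f‖ * C :=
    calc f (∑ k ∈ F, z k) ≤ ‖f‖ * ‖∑ k ∈ F, z k‖ := (le_abs_self _).trans (f.le_opNorm _)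
      _ ≤ ‖f‖ * C := mul_le_mul_of_nonneg_left (h F hadmissible) (norm_nonneg f)
  have := (div_lt_iff₀ hε).1 hs
  linarith

theorem stmt6_general {Z : Type*} [NormedAddCommGroup Z] [NormedSpace ℝ Z]
    (z : ℕ → Z) (C : ℝ)
    (h : ∀ F : Finset ℕ, (∀ k ∈ F, F.card ≤ k) → ‖∑ k ∈ F, z k‖ ≤ C) :
    ∀ f : Z →L[ℝ] ℝ, Filter.Tendsto (fun n => f (z n)) Filter.atTop (nhds 0) := by
  intro f
  refine tendsto_order.2 ⟨fun a ha => ?_, fun a ha => eventually_apply_lt_of_norm_sum_le h f ha⟩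
  filter_upwards [eventually_apply_lt_of_norm_sum_le h (-f) (neg_pos.2 ha)] with n hn
  simp only [neg_apply] at hn
  linarith

/-- Let `(z n)` be a sequence in a Banach space `Z` and `C ≥ 1` a
constant such that for every finite set `F = {k_1 < ⋯ < k_s}` of indices with
`s ≤ k_1` (equivalently `F.card ≤ k` for every `k ∈ F`), we have
`‖z k_1 + ⋯ + z k_s‖ ≤ C`.  Then `(z n)` converges weakly to `0`, i.e.
`f (z n) → 0` for every bounded linear functional `f` on `Z`. -/
theorem stmt6 {Z : Type*} [NormedAddCommGroup Z] [NormedSpace ℝ Z] [CompleteSpace Z]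
    (z : ℕ → Z) (C : ℝ) (hC : 1 ≤ C)
    (h : ∀ F : Finset ℕ, (∀ k ∈ F, F.card ≤ k) → ‖∑ k ∈ F, z k‖ ≤ C) :
    ∀ f : Z →L[ℝ] ℝ, Filter.Tendsto (fun n => f (z n)) Filter.atTop (nhds 0) :=
  stmt6_general z C h
end

section
/- For every j ≥ 3, s ≥ 3, and indices j_1 < j_2 < ⋯ < j_s with s ≤ j_1 and j_1 ≥ 3, if (F_{j_k})_{k=1}^s are successive finite subsets of ℕ with #F_{j_k} = p_{j_k}, then the functional Σ_{k=1}^s (1/m_{j_k}) Σ_{i∈F_{j_k}} e_i* belongs to the norming set K_0. -/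
/-- `f < g` for finitely supported vectors. -/
def Succ (f g : ℕ →₀ ℝ) : Prop := ∀ a ∈ f.support, ∀ b ∈ g.support, a < b

/-- The norming set `K₀` of the mixed Tsirelson space
`T₀ = T[(A_{n_j}, 1/m_j)_j]`: the minimal subset of `c₀₀(ℕ)` containing
`{±e_i*}` and closed, for each `j`, under the operation assigning to successive
`f_1 < ⋯ < f_d` in `K₀` with `d ≤ n j` the functional `(1/m j)(f_1 + ⋯ + f_d)`. -/
inductive K0 (m n : ℕ → ℕ) : (ℕ →₀ ℝ) → Prop
  | pos (r : ℕ) : K0 m n (Finsupp.single r 1)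
  | neg (r : ℕ) : K0 m n (-Finsupp.single r 1)
  | op (j d : ℕ) (hd : d ≤ n j) (f : Fin d → ℕ →₀ ℝ)
      (hmem : ∀ t, K0 m n (f t))
      (hsucc : ∀ t t' : Fin d, t < t' → Succ (f t) (f t')) :
      K0 m n (((m j : ℝ))⁻¹ • ∑ t, f t)

/-!
Put `q = j_1 - 1 ≥ 2` and `P = n_1 ⋯ n_{q-1}`. Each `F_{j_k}` splits into `P` successive blocks
of size `n_q ⋯ n_{j_k - 1}`, and a block weighted by `1/(m_q ⋯ m_{j_k - 1})` lies in `K₀` by a tree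
of operations of types `q, …, j_k - 1`. Since `m_{r+1} = m_r²`, `m_q · m_q ⋯ m_{j_k - 1} = m_{j_k}`,
so the functional is a single operation of type `q` applied to all `s · P` blocks; it is admissible
because `s · P ≤ (q + 1) n_1 ⋯ n_{q-1} ≤ n_q` by the growth of `(n_j)`.
-/

open Finset

noncomputable def ones (A : Finset ℕ) : ℕ →₀ ℝ := ∑ i ∈ A, Finsupp.single i 1

lemma support_smul_ones_subset (w : ℝ) (A : Finset ℕ) : (w • ones A).support ⊆ A := by
  intro a ha
  obtain ⟨i, hi, hai⟩ := Finsupp.mem_support_finsetSum a (Finsupp.support_smul ha)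
  obtain ⟨rfl, -⟩ := (Finsupp.mem_support_single _ _ _).1 hai
  exact hi

lemma succ_smul_ones {A B : Finset ℕ} (w w' : ℝ) (h : ∀ a ∈ A, ∀ b ∈ B, a < b) :
    Succ (w • ones A) (w' • ones B) := fun a ha b hb =>
  h a (support_smul_ones_subset w A ha) b (support_smul_ones_subset w' B hb)

lemma Finset.exists_successive_partition (A : Finset ℕ) (D Q : ℕ) (h : #A = D * Q) :
    ∃ B : Fin D → Finset ℕ, (∀ c, #(B c) = Q) ∧ (∀ c, B c ⊆ A) ∧
      (∀ c c', c < c' → ∀ a ∈ B c, ∀ b ∈ B c', a < b) ∧ ones A = ∑ c, ones (B c) := by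
  set e := A.orderEmbOfFin h
  have hinj (c : Fin D) : Function.Injective fun u : Fin Q => e (finProdFinEquiv (c, u)) :=
    fun u u' huu => by simpa using e.injective huu
  refine ⟨fun c => univ.map ⟨_, hinj c⟩, fun c => by simp, fun c => ?_, ?_, ?_⟩
  · simp [subset_iff, e]
  · intro c c' hcc a ha b hb
    simp only [mem_map, mem_univ, true_and, Function.Embedding.coeFn_mk] at ha hb
    obtain ⟨u, rfl⟩ := ha
    obtain ⟨u', rfl⟩ := hb
    refine e.strictMono (Fin.lt_def.2 ?_)
    have : Q * ((c : ℕ) + 1) ≤ Q * c' := Nat.mul_le_mul_left _ hcc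
    simp only [finProdFinEquiv_apply_val]
    nlinarith [u.isLt]
  · unfold ones
    conv_lhs => rw [← A.map_orderEmbOfFin_univ h, sum_map, ← finProdFinEquiv.sum_comp,
      Fintype.sum_prod_type]
    simp [sum_map, e]

lemma K0.op_of_linearOrder {m n : ℕ → ℕ} {ι : Type*} [Fintype ι] [LinearOrder ι] (j : ℕ)
    (hcard : Fintype.card ι ≤ n j) (f : ι → ℕ →₀ ℝ) (hmem : ∀ i, K0 m n (f i))
    (hsucc : ∀ i i', i < i' → Succ (f i) (f i')) : K0 m n ((m j : ℝ)⁻¹ • ∑ i, f i) := by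
  set e := monoEquivOfFin ι rfl
  rw [← e.toEquiv.sum_comp]
  exact K0.op j _ hcard (f ∘ e) (fun t => hmem _) fun t t' h => hsucc _ _ (e.strictMono h)

lemma K0.sum_smul_ones {m n : ℕ → ℕ} {ι : Type*} [Fintype ι] [LinearOrder ι] (j : ℕ)
    (hcard : Fintype.card ι ≤ n j) (W : ι → ℕ) (B : ι → Finset ℕ)
    (hmem : ∀ i, K0 m n ((W i : ℝ)⁻¹ • ones (B i)))
    (hsucc : ∀ i i', i < i' → ∀ a ∈ B i, ∀ b ∈ B i', a < b) :
    K0 m n (∑ i, ((m j * W i : ℕ) : ℝ)⁻¹ • ones (B i)) := by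
  have := K0.op_of_linearOrder j hcard _ hmem fun i i' h => succ_smul_ones _ _ (hsucc i i' h)
  simpa only [smul_sum, smul_smul, Nat.cast_mul, mul_inv] using this

lemma K0.smul_ones_of_card_eq_prod {m n : ℕ → ℕ} {a b : ℕ} (hab : a ≤ b) (A : Finset ℕ)
    (hA : #A = ∏ r ∈ Ico a b, n r) : K0 m n (((∏ r ∈ Ico a b, m r : ℕ) : ℝ)⁻¹ • ones A) := by
  induction b, hab using Nat.le_induction generalizing A with
  | base =>
    obtain ⟨i, rfl⟩ := card_eq_one.1 (by simpa using hA)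
    simpa [ones] using K0.pos i
  | succ b hab ih =>
    rw [prod_Ico_succ_top hab, mul_comm] at hA ⊢
    obtain ⟨B, hBcard, -, hBsucc, hAB⟩ := A.exists_successive_partition _ _ hA
    have := K0.sum_smul_ones b (Fintype.card_fin _).le _ B (fun c => ih (B c) (hBcard c)) hBsucc
    rwa [← smul_sum, ← hAB] at this

lemma K0.sum_smul_ones_of_card_eq_mul {m n : ℕ → ℕ} {s P q : ℕ} (hcard : s * P ≤ n q)
    (F : Fin s → Finset ℕ) (hF : ∀ k k', k < k' → ∀ a ∈ F k, ∀ b ∈ F k', a < b)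
    (N W : Fin s → ℕ) (hFcard : ∀ k, #(F k) = P * N k)
    (hmem : ∀ k A, #A = N k → K0 m n ((W k : ℝ)⁻¹ • ones A)) :
    K0 m n (∑ k, ((m q * W k : ℕ) : ℝ)⁻¹ • ones (F k)) := by
  choose B hBcard hBF hBsucc hFB using fun k => (F k).exists_successive_partition P (N k) (hFcard k)
  have := K0.sum_smul_ones (ι := Fin s ×ₗ Fin P) q (by simpa using hcard)
    (fun x => W (ofLex x).1) (fun x => B (ofLex x).1 (ofLex x).2)
    (fun x => hmem _ _ (hBcard _ _)) ?_
  · convert this using 1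
    rw [← (Equiv.sum_comp toLex _)]
    simp [Fintype.sum_prod_type, hFB, smul_sum]
  · intro x y hxy a ha b hb
    rcases Prod.Lex.lt_iff.1 hxy with h | ⟨h, h'⟩
    · exact hF _ _ h a (hBF _ _ ha) b (hBF _ _ hb)
    · rw [h] at ha
      exact hBsucc _ _ _ h' a ha b hb

lemma m_pos {m : ℕ → ℕ} (hm2 : m 2 = 2) (hmrec : ∀ j, 3 ≤ j → m j = m (j - 1) ^ 2) :
    ∀ r, 2 ≤ r → 0 < m r := by
  intro r hr
  induction r, hr using Nat.le_induction with
  | base => omega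
  | succ r hr ih => rw [hmrec (r + 1) (by omega)]; exact pow_pos ih 2

lemma m_mul_prod_Ico {m : ℕ → ℕ} (hmrec : ∀ j, 3 ≤ j → m j = m (j - 1) ^ 2) {q : ℕ}
    (hq : 2 ≤ q) : ∀ b, q < b → m q * ∏ r ∈ Ico q b, m r = m b := by
  intro b hb
  induction b, hb using Nat.le_induction with
  | base => simp [hmrec (q + 1) (by omega), sq]
  | succ b hb ih =>
    rw [prod_Ico_succ_top (by omega), ← mul_assoc, ih, hmrec (b + 1) (by omega),
      Nat.add_sub_cancel, sq]

lemma three_mul_sq_le {m n : ℕ → ℕ} (hm2 : m 2 = 2) (hmrec : ∀ j, 3 ≤ j → m j = m (j - 1) ^ 2)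
    (hnrec : ∀ j, 2 ≤ j → (4 * n (j - 1)) ^ 5 * m j ≤ n j) (i : ℕ) (hi : 1 ≤ i) :
    3 * n i ^ 2 ≤ n (i + 1) := by
  have hm := m_pos hm2 hmrec (i + 1) (by omega)
  have h := hnrec (i + 1) (by omega)
  rw [Nat.add_sub_cancel] at h
  calc 3 * n i ^ 2 ≤ (4 * n i) ^ 5 := by
        rcases Nat.eq_zero_or_pos (n i) with h0 | h0
        · simp [h0]
        · have : 1 ≤ n i ^ 3 := Nat.one_le_pow _ _ h0
          nlinarith
    _ ≤ (4 * n i) ^ 5 * m (i + 1) := Nat.le_mul_of_pos_right _ hm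
    _ ≤ n (i + 1) := h

lemma succ_mul_prod_Ico_le {n : ℕ → ℕ} (hn : ∀ i, 1 ≤ i → 3 * n i ^ 2 ≤ n (i + 1)) :
    ∀ q, 2 ≤ q → (q + 1) * ∏ r ∈ Ico 1 q, n r ≤ n q := by
  intro q hq
  induction q, hq using Nat.le_induction with
  | base =>
    have := hn 1 le_rfl
    simp only [Nat.reduceAdd, Nat.Ico_succ_singleton, prod_singleton] at this ⊢
    nlinarith [Nat.le_self_pow two_ne_zero (n 1)]
  | succ q hq ih =>
    rw [prod_Ico_succ_top (by omega)]
    calc (q + 1 + 1) * ((∏ r ∈ Ico 1 q, n r) * n q)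
        ≤ 3 * ((q + 1) * ∏ r ∈ Ico 1 q, n r) * n q := by
          rw [← mul_assoc, ← mul_assoc]
          gcongr
          omega
      _ ≤ 3 * n q * n q := by gcongr
      _ = 3 * n q ^ 2 := by ring
      _ ≤ n (q + 1) := hn q (by omega)

/-- With the parameters of the paper, for every `s ≥ 3` and indices
`j_1 < j_2 < ⋯ < j_s` with `s ≤ j_1` and `j_1 ≥ 3`, if `(F (j k))` are
successive finite subsets of `ℕ` with `#(F k) = p (j k)`, then the functional
`Σ_{k=1}^s (1/m (j k)) Σ_{i ∈ F k} e_i*` belongs to `K₀`. -/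
theorem stmt8 (m n : ℕ → ℕ) (hm2 : m 2 = 2)
    (hmrec : ∀ j, 3 ≤ j → m j = (m (j - 1)) ^ 2)
    (hnrec : ∀ j, 2 ≤ j → (4 * n (j - 1)) ^ 5 * m j ≤ n j)
    (p : ℕ → ℕ) (hp : ∀ j, p j = ∏ i ∈ Finset.Icc 1 (j - 1), n i)
    (s : ℕ) (hs : 3 ≤ s) (j : Fin s → ℕ) (hjmono : StrictMono j)
    (hj1 : s ≤ j ⟨0, by omega⟩)
    (F : Fin s → Finset ℕ) (hcard : ∀ k, (F k).card = p (j k))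
    (hFsucc : ∀ k k' : Fin s, k < k' → ∀ a ∈ F k, ∀ b ∈ F k', a < b) :
    K0 m n (∑ k : Fin s, ((m (j k) : ℝ))⁻¹ • ∑ i ∈ F k, Finsupp.single i (1 : ℝ)) := by
  set q := j ⟨0, by omega⟩ - 1
  have hq : 2 ≤ q := by omega
  have hqj (k : Fin s) : q < j k := by
    have := hjmono.monotone (show ⟨0, by omega⟩ ≤ k from Nat.zero_le _)
    omega
  have hsq : s * ∏ r ∈ Ico 1 q, n r ≤ n q :=
    (Nat.mul_le_mul_right _ (by omega)).trans
      (succ_mul_prod_Ico_le (three_mul_sq_le hm2 hmrec hnrec) q hq)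
  have hFcard (k : Fin s) : #(F k) = (∏ r ∈ Ico 1 q, n r) * ∏ r ∈ Ico q (j k), n r := by
    rw [hcard, hp, Icc_sub_one_right_eq_Ico_of_not_isMin (by simpa using (hqj k).ne_bot) 1,
      prod_Ico_consecutive _ (by omega) (hqj k).le]
  have := K0.sum_smul_ones_of_card_eq_mul hsq F hFsucc _ _ hFcard
    fun k A hA => K0.smul_ones_of_card_eq_prod (m := m) (hqj k).le A hA
  simpa only [m_mul_prod_Ico hmrec hq _ (hqj _), ones] using this
end

section
/- Let Φ = (φ_i)_{i=1}^N and Ψ = (ψ_i)_{i=1}^N be two distinct sequences such that w(φ_{i+1}) = σ(φ_1, …, φ_i) and w(ψ_{i+1}) = σ(ψ_1, …, ψ_i) for all i, where σ is injective, and w(φ_1), w(ψ_1) are not in the range of σ. Then: (i) for 1 ≤ i < l ≤ N, w(φ_i) ≠ w(ψ_l); (ii) there exists k such that φ_i = ψ_i for all i < k, and w(φ_i) ≠ w(ψ_i) for all i > k. -/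
/-- tree-like property of special sequences: Let `F` be a type,
`w : F → ℕ` a weight function and `σ : List F → ℕ` an injective coding function.
Let `Φ = (Φ 1, …, Φ N)` and `Ψ = (Ψ 1, …, Ψ N)` be two distinct sequences with
`w (Φ (i+1)) = σ (Φ 1, …, Φ i)` and `w (Ψ (i+1)) = σ (Ψ 1, …, Ψ i)` for
`1 ≤ i < N`, and with `w (Φ 1)`, `w (Ψ 1)` outside the range of `σ`. Then:
(i) for `1 ≤ i < l ≤ N`, `w (Φ i) ≠ w (Ψ l)`;
(ii) there exists `k` such that `Φ i = Ψ i` for all `i < k` and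
`w (Φ i) ≠ w (Ψ i)` for all `k < i ≤ N`. -/
theorem stmt11 {F : Type*} (w : F → ℕ) (σ : List F → ℕ) (hσ : Function.Injective σ)
    (N : ℕ) (Φ Ψ : ℕ → F)
    (hΦ : ∀ i, 1 ≤ i → i < N →
      w (Φ (i + 1)) = σ ((List.range i).map (fun t => Φ (t + 1))))
    (hΨ : ∀ i, 1 ≤ i → i < N →
      w (Ψ (i + 1)) = σ ((List.range i).map (fun t => Ψ (t + 1))))
    (hΦ1 : w (Φ 1) ∉ Set.range σ) (hΨ1 : w (Ψ 1) ∉ Set.range σ)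
    (hdist : ∃ i, 1 ≤ i ∧ i ≤ N ∧ Φ i ≠ Ψ i) :
    (∀ i l, 1 ≤ i → i < l → l ≤ N → w (Φ i) ≠ w (Ψ l)) ∧
    (∃ k, (∀ i, 1 ≤ i → i < k → Φ i = Ψ i) ∧
      (∀ i, k < i → i ≤ N → w (Φ i) ≠ w (Ψ i))) := by
  constructor
  · intro i l hi hil hlN heq
    -- l ≥ 2, so w (Ψ l) ∈ range σ
    obtain ⟨l', rfl⟩ : ∃ l', l = l' + 1 := ⟨l - 1, by omega⟩
    have hl' : w (Ψ (l' + 1)) = σ ((List.range l').map (fun t => Ψ (t + 1))) :=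
      hΨ l' (by omega) (by omega)
    rcases Nat.lt_or_ge i 2 with h2 | h2
    · have : i = 1 := by omega
      subst this
      exact hΦ1 ⟨_, (heq.trans hl').symm⟩
    · obtain ⟨i', rfl⟩ : ∃ i', i = i' + 1 := ⟨i - 1, by omega⟩
      have hi' : w (Φ (i' + 1)) = σ ((List.range i').map (fun t => Φ (t + 1))) :=
        hΦ i' (by omega) (by omega)
      have hlist := hσ (hi'.symm.trans (heq.trans hl'))
      have := congrArg List.length hlist
      simp at this
      omega
  · have hP : ∃ k, 1 ≤ k ∧ Φ k ≠ Ψ k := by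
      obtain ⟨i, h1, _, h3⟩ := hdist; exact ⟨i, h1, h3⟩
    classical
    set k := Nat.find hP with hk
    have hkspec := Nat.find_spec hP
    refine ⟨k, ?_, ?_⟩
    · intro i hi hik
      by_contra hne
      have : k ≤ i := Nat.find_le ⟨hi, hne⟩
      omega
    · intro i hki hiN heq
      have hk1 : 1 ≤ k := hkspec.1
      obtain ⟨i', rfl⟩ : ∃ i', i = i' + 1 := ⟨i - 1, by omega⟩
      have hi' : w (Φ (i' + 1)) = σ ((List.range i').map (fun t => Φ (t + 1))) :=
        hΦ i' (by omega) (by omega)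
      have hl' : w (Ψ (i' + 1)) = σ ((List.range i').map (fun t => Ψ (t + 1))) :=
        hΨ i' (by omega) (by omega)
      have hlist := hσ (hi'.symm.trans (heq.trans hl'))
      rw [List.map_eq_map_iff] at hlist
      have hmem : k - 1 ∈ List.range i' := by
        rw [List.mem_range]; omega
      have := hlist _ hmem
      have hk' : k - 1 + 1 = k := by omega
      rw [hk'] at this
      exact hkspec.2 this
end

section
/- Let X be a Banach space with a bimonotone Schauder basis, and let x = (1/k) Σ_{i=1}^k x_i where x_1 < x_2 < ⋯ < x_k are successive finitely supported vectors with ‖x_i‖ ≤ C for each i. Then for every d ≤ k and every sequence of successive intervals E_1 < E_2 < ⋯ < E_d of ℕ, Σ_{i=1}^d ‖E_i x‖ ≤ C(1 + 2d/k). -/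
/-!
By the triangle inequality, `N (E x) ≤ C / k · #{i | E meets supp xᵢ}`, since bimonotonicity gives
`N (E xᵢ) ≤ N xᵢ ≤ C`. A block meeting an interval `E = [a, b]` either lies inside `E` or has
support on both sides of one of the cuts `(-∞, a)`, `(-∞, b]`; successiveness allows at most one
block per cut. Blocks lying inside distinct (disjoint) intervals are distinct, so summing over the
`d` intervals counts at most `k + 2d` blocks.
-/

open Finset Function

variable {ι κ α M : Type*}

section Blocks

variable [Zero M] [Fintype ι]

open scoped Classical in
noncomputable def blocksMeeting (x : ι → α →₀ M) (s : Set α) : Finset ι :=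
  {i | ∃ a ∈ (x i).support, a ∈ s}

open scoped Classical in
noncomputable def blocksInside (x : ι → α →₀ M) (s : Set α) : Finset ι :=
  {i | x i ≠ 0 ∧ ↑(x i).support ⊆ s}

theorem sum_card_blocksInside_le [Fintype κ] (x : ι → α →₀ M) (s : κ → Set α)
    (hs : Pairwise (Disjoint on s)) :
    ∑ j, #(blocksInside x (s j)) ≤ Fintype.card ι := by
  classical
  have hdisj : (↑(univ : Finset κ) : Set κ).PairwiseDisjoint fun j => blocksInside x (s j) := by
    intro j _ j' _ hjj'
    refine Finset.disjoint_left.2 fun i hi hi' => ?_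
    simp only [blocksInside, mem_filter, mem_univ, true_and] at hi hi'
    obtain ⟨a, ha⟩ := Finsupp.support_nonempty_iff.2 hi.1
    exact Set.disjoint_left.1 (hs hjj') (hi.2 ha) (hi'.2 ha)
  rw [← card_biUnion hdisj]
  exact card_le_univ _

variable [LinearOrder α]

def SuccessiveSupports [LT ι] (x : ι → α →₀ M) : Prop :=
  ∀ i i', i < i' → ∀ a ∈ (x i).support, ∀ b ∈ (x i').support, a < b

theorem SuccessiveSupports.card_meeting_inter_meeting_compl_le_one [LinearOrder ι]
    {x : ι → α →₀ M} (hx : SuccessiveSupports x) {L : Set α} (hL : IsLowerSet L) :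
    #(blocksMeeting x L ∩ blocksMeeting x Lᶜ) ≤ 1 := by
  have key : ∀ i i', i < i' → i ∈ blocksMeeting x Lᶜ → i' ∈ blocksMeeting x L → False := by
    intro i i' hii' hi hi'
    simp only [blocksMeeting, mem_filter, mem_univ, true_and] at hi hi'
    obtain ⟨q, hq, hqL⟩ := hi
    obtain ⟨p, hp, hpL⟩ := hi'
    exact hqL (hL (hx i i' hii' q hq p hp).le hpL)
  refine card_le_one.2 fun i hi i' hi' => ?_
  rw [mem_inter] at hi hi'
  by_contra hne
  rcases lt_or_gt_of_ne hne with h | h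
  · exact key i i' h hi.2 hi'.1
  · exact key i' i h hi'.2 hi.1

theorem blocksMeeting_Icc_subset [DecidableEq ι] (x : ι → α →₀ M) (a b : α) :
    blocksMeeting x (Set.Icc a b) ⊆ blocksInside x (Set.Icc a b) ∪
      (blocksMeeting x (Set.Iio a) ∩ blocksMeeting x (Set.Iio a)ᶜ) ∪
      (blocksMeeting x (Set.Iic b) ∩ blocksMeeting x (Set.Iic b)ᶜ) := by
  intro i hi
  simp only [blocksMeeting, blocksInside, mem_union, mem_inter, mem_filter, mem_univ,
    true_and] at hi ⊢
  obtain ⟨q, hq, hqa, hqb⟩ := hi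
  by_cases hinside : ↑(x i).support ⊆ Set.Icc a b
  · exact Or.inl (Or.inl ⟨Finsupp.support_nonempty_iff.1 ⟨q, hq⟩, hinside⟩)
  obtain ⟨p, hp, hpE⟩ := Set.not_subset.1 hinside
  rcases not_and_or.1 hpE with hpa | hpb
  · exact Or.inl (Or.inr ⟨⟨p, hp, not_le.1 hpa⟩, q, hq, not_lt.2 hqa⟩)
  · exact Or.inr ⟨⟨q, hq, hqb⟩, p, hp, hpb⟩

theorem SuccessiveSupports.card_blocksMeeting_Icc_le [LinearOrder ι] {x : ι → α →₀ M}
    (hx : SuccessiveSupports x) (a b : α) :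
    #(blocksMeeting x (Set.Icc a b)) ≤ #(blocksInside x (Set.Icc a b)) + 2 := by
  calc #(blocksMeeting x (Set.Icc a b))
      ≤ #(blocksInside x (Set.Icc a b)) +
          #(blocksMeeting x (Set.Iio a) ∩ blocksMeeting x (Set.Iio a)ᶜ) +
          #(blocksMeeting x (Set.Iic b) ∩ blocksMeeting x (Set.Iic b)ᶜ) :=
        (card_le_card (blocksMeeting_Icc_subset x a b)).trans
          ((card_union_le _ _).trans (Nat.add_le_add_right (card_union_le _ _) _))
    _ ≤ #(blocksInside x (Set.Icc a b)) + 1 + 1 := by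
        gcongr
        · exact hx.card_meeting_inter_meeting_compl_le_one (isLowerSet_Iio a)
        · exact hx.card_meeting_inter_meeting_compl_le_one (isLowerSet_Iic b)

theorem SuccessiveSupports.sum_card_blocksMeeting_Icc_le [LinearOrder ι] [Fintype κ]
    {x : ι → α →₀ M} (hx : SuccessiveSupports x) (a b : κ → α)
    (hab : Pairwise (Disjoint on fun j => Set.Icc (a j) (b j))) :
    ∑ j, #(blocksMeeting x (Set.Icc (a j) (b j))) ≤ Fintype.card ι + 2 * Fintype.card κ :=
  calc ∑ j, #(blocksMeeting x (Set.Icc (a j) (b j)))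
      ≤ ∑ j, (#(blocksInside x (Set.Icc (a j) (b j))) + 2) :=
        sum_le_sum fun j _ => hx.card_blocksMeeting_Icc_le (a j) (b j)
    _ ≤ Fintype.card ι + 2 * Fintype.card κ := by
        rw [sum_add_distrib, sum_const, card_univ, smul_eq_mul, mul_comm]
        gcongr
        exact sum_card_blocksInside_le x _ hab

end Blocks

theorem pairwise_disjoint_of_forall_lt [LinearOrder κ] [Preorder α] {s : κ → Set α}
    (hs : ∀ j j', j < j' → ∀ a ∈ s j, ∀ b ∈ s j', a < b) : Pairwise (Disjoint on s) := by
  intro j j' hjj'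
  refine Set.disjoint_left.2 fun p hp hp' => ?_
  rcases lt_or_gt_of_ne hjj' with h | h
  · exact lt_irrefl p (hs j j' h p hp p hp')
  · exact lt_irrefl p (hs j' j h p hp' p hp)

theorem Seminorm.filter_sum_le_card_blocksMeeting_mul {𝕜 : Type*} [SeminormedRing 𝕜]
    [AddCommGroup M] [SMul 𝕜 (α →₀ M)] [DecidableEq α] [Fintype ι] (N : Seminorm 𝕜 (α →₀ M))
    (x : ι → α →₀ M) (E : Finset α) {C : ℝ} (hC : ∀ i, N ((x i).filter (· ∈ E)) ≤ C) :
    N ((∑ i, x i).filter (· ∈ E)) ≤ #(blocksMeeting x E) * C := by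
  have hvanish : ∀ i ∉ blocksMeeting x E, (x i).filter (· ∈ E) = 0 := by
    intro i hi
    refine (Finsupp.filter_eq_zero_iff _ _).2 fun a ha => ?_
    by_contra hxa
    simp only [blocksMeeting, mem_filter, mem_univ, true_and, not_exists, not_and] at hi
    exact hi a (Finsupp.mem_support_iff.2 hxa) ha
  calc N ((∑ i, x i).filter (· ∈ E))
      ≤ ∑ i, N ((x i).filter (· ∈ E)) := by
        rw [Finsupp.filter_sum]
        exact le_sum_of_subadditive N (map_zero N).le (map_add_le_add N) _ _
    _ = ∑ i ∈ blocksMeeting x E, N ((x i).filter (· ∈ E)) :=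
        (sum_subset (subset_univ _) fun i _ hi => by rw [hvanish i hi, map_zero]).symm
    _ ≤ #(blocksMeeting x E) * C := by
        rw [← nsmul_eq_mul]
        exact sum_le_card_nsmul _ _ _ fun i _ => hC i

theorem stmt12_general (N : Seminorm ℝ (ℕ →₀ ℝ))
    (hbimono : ∀ (y : ℕ →₀ ℝ) (a b : ℕ),
      N (y.filter (· ∈ Finset.Icc a b)) ≤ N y)
    (C : ℝ) (k : ℕ) (hk : 1 ≤ k)
    (xx : Fin k → (ℕ →₀ ℝ))
    (hsucc : ∀ i i' : Fin k, i < i' →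
      ∀ a ∈ (xx i).support, ∀ b ∈ (xx i').support, a < b)
    (hC : ∀ i, N (xx i) ≤ C)
    (x : ℕ →₀ ℝ) (hx : x = ((k : ℝ))⁻¹ • ∑ i, xx i)
    (d : ℕ)
    (E : Fin d → Finset ℕ)
    (hE : ∀ i, ∃ a b, E i = Finset.Icc a b)
    (hEsucc : ∀ i i' : Fin d, i < i' → ∀ a ∈ E i, ∀ b ∈ E i', a < b) :
    ∑ i : Fin d, N (x.filter (· ∈ E i)) ≤ C * (1 + 2 * d / k) := by
  have hC0 : 0 ≤ C := (apply_nonneg N _).trans (hC ⟨0, hk⟩)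
  choose a b hab using hE
  have hIcc : ∀ j, (E j : Set ℕ) = Set.Icc (a j) (b j) := fun j => by rw [hab j, coe_Icc]
  have hdisj : Pairwise (Disjoint on fun j => Set.Icc (a j) (b j)) := by
    simp_rw [← hIcc]
    exact pairwise_disjoint_of_forall_lt hEsucc
  have hblock : ∀ j,
      N (x.filter (· ∈ E j)) ≤ #(blocksMeeting xx (Set.Icc (a j) (b j))) * C / k := by
    intro j
    have hCj : ∀ i, N ((xx i).filter (· ∈ E j)) ≤ C :=
      fun i => hab j ▸ (hbimono _ _ _).trans (hC i)
    rw [hx, Finsupp.filter_smul, map_smul_eq_mul, norm_inv, Real.norm_natCast, inv_mul_eq_div,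
      ← hIcc]
    gcongr
    exact N.filter_sum_le_card_blocksMeeting_mul xx (E j) hCj
  have hcount : ∑ j, (#(blocksMeeting xx (Set.Icc (a j) (b j))) : ℝ) ≤ k + 2 * d := by
    have := SuccessiveSupports.sum_card_blocksMeeting_Icc_le hsucc a b hdisj
    rw [Fintype.card_fin, Fintype.card_fin] at this
    exact_mod_cast this
  calc ∑ j, N (x.filter (· ∈ E j))
      ≤ ∑ j, #(blocksMeeting xx (Set.Icc (a j) (b j))) * C / k :=
        sum_le_sum fun j _ => hblock j
    _ ≤ (k + 2 * d) * C / k := by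
        rw [← sum_div, ← sum_mul]
        gcongr
    _ = C * (1 + 2 * d / k) := by field_simp

/-- Let `N` be a (bimonotone) norm on `c₀₀(ℕ)`, i.e. a seminorm
such that `N (E x) ≤ N x` for every interval `E` of `ℕ`, and let
`x = (1/k) Σ_{i=1}^k x_i` where `x_1 < ⋯ < x_k` are successive finitely
supported vectors with `N (x_i) ≤ C`.  Then for every `d ≤ k` and every
sequence of successive intervals `E_1 < ⋯ < E_d` of `ℕ`,
`Σ_{i=1}^d N (E_i x) ≤ C (1 + 2 d / k)`. -/
theorem stmt12 (N : Seminorm ℝ (ℕ →₀ ℝ))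
    (hbimono : ∀ (y : ℕ →₀ ℝ) (a b : ℕ),
      N (y.filter (· ∈ Finset.Icc a b)) ≤ N y)
    (C : ℝ) (k : ℕ) (hk : 1 ≤ k)
    (xx : Fin k → (ℕ →₀ ℝ))
    (hsucc : ∀ i i' : Fin k, i < i' →
      ∀ a ∈ (xx i).support, ∀ b ∈ (xx i').support, a < b)
    (hC : ∀ i, N (xx i) ≤ C)
    (x : ℕ →₀ ℝ) (hx : x = ((k : ℝ))⁻¹ • ∑ i, xx i)
    (d : ℕ) (hd : d ≤ k)
    (E : Fin d → Finset ℕ)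
    (hE : ∀ i, ∃ a b, E i = Finset.Icc a b)
    (hEsucc : ∀ i i' : Fin d, i < i' → ∀ a ∈ E i, ∀ b ∈ E i', a < b) :
    ∑ i : Fin d, N (x.filter (· ∈ E i)) ≤ C * (1 + 2 * d / k) :=
  stmt12_general N hbimono C k hk xx hsucc hC x hx d E hE hEsucc
end

section
/- Let x ∈ c_00(ℕ) and let I_1 < I_2 < ⋯ < I_p be successive intervals of ℕ. If φ = (1/w) Σ_{l=1}^d φ_l with φ_1 < ⋯ < φ_d successive elements of a norming set K that is closed under restriction to intervals, and α = (1/m) Σ_{i=1}^p ‖I_i x‖ where ‖·‖ is the norm induced by K, then |φ((1/m) Σ_{i=1}^p I_i x)| ≤ (d/m)·‖x‖ + (1/w)·α. -/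
/-- The action `f(x) = Σ_a f(e_a) x(e_a)` of a functional on a vector. -/
def pair (f x : ℕ →₀ ℝ) : ℝ := ∑ a ∈ f.support, f a * x a

/-- The norm induced by a norming set `K` on `c₀₀(ℕ)`. -/
noncomputable def normK (K : Set (ℕ →₀ ℝ)) (x : ℕ →₀ ℝ) : ℝ :=
  sSup {r | ∃ f ∈ K, r = pair f x}

/-!
Expand `φ(Σ_i I_i x) = w⁻¹ Σ_{i,l} φ_l(I_i x)`. Only the pairs `(i, l)` with `φ_l` meeting `I_i`
contribute, and since both families are successive these pairs form a staircase: if `(i, l)` and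
`(i', l')` contribute and `i < i'`, then `l ≤ l'`. For each `i` the pair with the least `l`
contributes at most `‖I_i x‖`. Every other contributing pair `(i, l)` has some `l' < l` meeting
`I_i`, so by the staircase property no second such pair has second coordinate `l`; hence there are
at most `d` of them, each contributing at most `‖x‖`, and `w ≥ 1` absorbs the factor `w⁻¹`.
-/

open Finset

lemma pair_eq_sum_of_support_subset {f : ℕ →₀ ℝ} {s : Finset ℕ} (hs : f.support ⊆ s)
    (x : ℕ →₀ ℝ) : pair f x = ∑ a ∈ s, f a * x a :=
  Finsupp.sum_of_support_subset f hs (fun a c => c * x a) fun _ _ => zero_mul _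

lemma pair_smul_left (c : ℝ) (f x : ℕ →₀ ℝ) : pair (c • f) x = c * pair f x := by
  change (c • f).sum (fun a b => b * x a) = c * f.sum (fun a b => b * x a)
  rw [Finsupp.sum_smul_index fun _ => zero_mul _, Finsupp.mul_sum]
  simp only [mul_assoc]

lemma pair_neg_left (f x : ℕ →₀ ℝ) : pair (-f) x = -pair f x := by
  simpa using pair_smul_left (-1) f x

lemma pair_sum_left {ι : Type*} (s : Finset ι) (f : ι → ℕ →₀ ℝ) (x : ℕ →₀ ℝ) :
    pair (∑ i ∈ s, f i) x = ∑ i ∈ s, pair (f i) x :=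
  (Finsupp.sum_finsetSum_index (h := fun a c => c * x a) (fun _ => zero_mul _)
    fun _ _ _ => add_mul _ _ _).symm

lemma pair_smul_right (c : ℝ) (f x : ℕ →₀ ℝ) : pair f (c • x) = c * pair f x := by
  simp only [pair, Finsupp.smul_apply, smul_eq_mul, mul_sum]
  exact sum_congr rfl fun _ _ => mul_left_comm _ _ _

lemma pair_sum_right {ι : Type*} (s : Finset ι) (f : ℕ →₀ ℝ) (x : ι → ℕ →₀ ℝ) :
    pair f (∑ i ∈ s, x i) = ∑ i ∈ s, pair f (x i) := by
  simp only [pair, Finsupp.finsetSum_apply, mul_sum]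
  exact sum_comm

lemma pair_filter_right (f x : ℕ →₀ ℝ) (p : ℕ → Prop) [DecidablePred p] :
    pair f (x.filter p) = pair (f.filter p) x := by
  rw [pair_eq_sum_of_support_subset (f := f.filter p)
    (Finsupp.support_filter p f ▸ filter_subset p f.support), pair]
  refine sum_congr rfl fun a _ => ?_
  by_cases ha : p a <;> simp [ha]

lemma pair_filter_eq_zero_of_disjoint {f : ℕ →₀ ℝ} {s : Finset ℕ} (h : Disjoint f.support s)
    (x : ℕ →₀ ℝ) : pair f (x.filter (· ∈ s)) = 0 :=
  sum_eq_zero fun _ ha => by rw [Finsupp.filter_apply_neg _ _ (disjoint_left.1 h ha), mul_zero]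

lemma le_of_pair_filter_ne_zero {ι κ : Type*} [LinearOrder ι] [LinearOrder κ]
    {φ : κ → ℕ →₀ ℝ} {I : ι → Finset ℕ}
    (hφ : ∀ l l', l < l' → ∀ a ∈ (φ l).support, ∀ b ∈ (φ l').support, a < b)
    (hI : ∀ i i', i < i' → ∀ a ∈ I i, ∀ b ∈ I i', a < b) (x : ℕ →₀ ℝ) {i i' : ι} {l l' : κ}
    (h : pair (φ l) (x.filter (· ∈ I i)) ≠ 0) (h' : pair (φ l') (x.filter (· ∈ I i')) ≠ 0)
    (hii : i < i') : l ≤ l' := by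
  have hmeet : ∀ i l, pair (φ l) (x.filter (· ∈ I i)) ≠ 0 → ∃ a ∈ (φ l).support, a ∈ I i :=
    fun i l h => by
      by_contra! hd
      exact h (pair_filter_eq_zero_of_disjoint (disjoint_left.2 hd) x)
  obtain ⟨a, ha, hai⟩ := hmeet i l h
  obtain ⟨b, hb, hbi⟩ := hmeet i' l' h'
  by_contra! hll
  exact (hI i i' hii a hai b hbi).not_gt (hφ l' l hll b hb a ha)

section NormingSet

variable {K : Set (ℕ →₀ ℝ)} {x : ℕ →₀ ℝ}

lemma pair_le_normK (hbdd : BddAbove {r | ∃ f ∈ K, r = pair f x}) {f : ℕ →₀ ℝ} (hf : f ∈ K) :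
    pair f x ≤ normK K x :=
  le_csSup hbdd ⟨f, hf, rfl⟩

lemma abs_pair_le_normK (hsym : ∀ f ∈ K, -f ∈ K) (hbdd : BddAbove {r | ∃ f ∈ K, r = pair f x})
    {f : ℕ →₀ ℝ} (hf : f ∈ K) : |pair f x| ≤ normK K x := by
  have hneg := pair_le_normK hbdd (hsym f hf)
  rw [pair_neg_left] at hneg
  exact abs_le.2 ⟨by linarith, pair_le_normK hbdd hf⟩

lemma normK_nonneg (hK : K.Nonempty) (hsym : ∀ f ∈ K, -f ∈ K)
    (hbdd : BddAbove {r | ∃ f ∈ K, r = pair f x}) : 0 ≤ normK K x :=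
  (abs_nonneg _).trans (abs_pair_le_normK hsym hbdd hK.some_mem)

lemma normK_filter_le (hK : K.Nonempty) {s : Finset ℕ} (hrestr : ∀ f ∈ K, f.filter (· ∈ s) ∈ K)
    (hbdd : BddAbove {r | ∃ f ∈ K, r = pair f x}) : normK K (x.filter (· ∈ s)) ≤ normK K x := by
  refine csSup_le ⟨_, hK.some, hK.some_mem, rfl⟩ ?_
  rintro r ⟨f, hf, rfl⟩
  rw [pair_filter_right]
  exact pair_le_normK hbdd (hrestr f hf)

end NormingSet

section Staircase

variable {ι κ : Type*} [LinearOrder κ]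

lemma sum_le_add_card_filter_exists_lt_mul (s : Finset κ) (f : κ → ℝ) {a b : ℝ} (ha : 0 ≤ a)
    (hfa : ∀ l ∈ s, f l ≤ a) (hfb : ∀ l ∈ s, f l ≤ b) :
    ∑ l ∈ s, f l ≤ a + #{l ∈ s | ∃ l' ∈ s, l' < l} * b := by
  classical
  rcases s.eq_empty_or_nonempty with rfl | hs
  · simpa using ha
  have hnonmin : {l ∈ s | ∃ l' ∈ s, l' < l} = s.erase (s.min' hs) := by
    ext l
    simp only [mem_filter, mem_erase]
    refine ⟨fun ⟨hl, l', hl', hlt⟩ => ⟨(s.min'_le l' hl' |>.trans_lt hlt).ne', hl⟩,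
      fun ⟨hne, hl⟩ => ⟨hl, s.min' hs, s.min'_mem hs, (s.min'_le l hl).lt_of_ne' hne⟩⟩
  rw [hnonmin, ← add_sum_erase s f (s.min'_mem hs)]
  gcongr
  · exact hfa _ (s.min'_mem hs)
  · simpa using sum_le_card_nsmul _ f b fun l hl => hfb l (mem_of_mem_erase hl)

variable [Fintype ι] [LinearOrder ι] [Fintype κ]

lemma sum_sum_le_of_staircase (f : ι → κ → ℝ)
    (hf : ∀ i i' l l', f i l ≠ 0 → f i' l' ≠ 0 → i < i' → l ≤ l') (A : ι → ℝ) (B : ℝ)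
    (hfA : ∀ i l, f i l ≤ A i) (hA : ∀ i, 0 ≤ A i) (hAB : ∀ i, A i ≤ B) (hB : 0 ≤ B) :
    ∑ i, ∑ l, f i l ≤ ∑ i, A i + Fintype.card κ * B := by
  classical
  set row : ι → Finset κ := fun i => {l | f i l ≠ 0}
  set nonmin : ι → Finset κ := fun i => {l ∈ row i | ∃ l' ∈ row i, l' < l}
  have hdisj : ((univ : Finset ι) : Set ι).PairwiseDisjoint nonmin := by
    suffices ∀ i i', i < i' → Disjoint (nonmin i) (nonmin i') from
      fun i _ i' _ hne => hne.lt_or_gt.elim (this i i') fun h => (this i' i h).symm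
    intro i i' hii
    refine disjoint_left.2 fun l hl hl' => ?_
    simp only [nonmin, row, mem_filter, mem_univ, true_and] at hl hl'
    obtain ⟨l', hl'0, hlt⟩ := hl'.2
    exact (hf i i' l l' hl.1 hl'0 hii).not_gt hlt
  have hcard : ∑ i, #(nonmin i) ≤ Fintype.card κ :=
    card_biUnion hdisj ▸ card_le_univ _
  calc ∑ i, ∑ l, f i l = ∑ i, ∑ l ∈ row i, f i l :=
        sum_congr rfl fun i _ => (sum_filter_of_ne fun _ _ h => h).symm
    _ ≤ ∑ i, (A i + #(nonmin i) * B) := by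
        gcongr with i
        exact sum_le_add_card_filter_exists_lt_mul _ _ (hA i) (fun l _ => hfA i l)
          fun l _ => (hfA i l).trans (hAB i)
    _ = ∑ i, A i + (∑ i, #(nonmin i) : ℕ) * B := by
        rw [sum_add_distrib, ← sum_mul, Nat.cast_sum]
    _ ≤ ∑ i, A i + Fintype.card κ * B := by gcongr

end Staircase

/-- splitting estimate: Let `K ⊂ c₀₀(ℕ)` be a norming set
(symmetric, containing `{±e_k*}`, closed under restriction to intervals, and
inducing a genuine norm, i.e. the relevant sets of values are bounded above).
Let `x ∈ c₀₀(ℕ)` and `I_1 < ⋯ < I_p` successive intervals of `ℕ`.  If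
`φ = (1/w) Σ_{l=1}^d φ_l` with `φ_1 < ⋯ < φ_d` successive elements of `K`, and
`α = (1/m) Σ_{i=1}^p ‖I_i x‖`, then
`|φ((1/m) Σ_{i=1}^p I_i x)| ≤ (d/m) ‖x‖ + (1/w) α`. -/
theorem stmt13 (K : Set (ℕ →₀ ℝ))
    (hbasis : ∀ r : ℕ, Finsupp.single r (1 : ℝ) ∈ K)
    (hsym : ∀ f ∈ K, -f ∈ K)
    (hrestr : ∀ f ∈ K, ∀ a b : ℕ, f.filter (· ∈ Finset.Icc a b) ∈ K)
    (hbdd : ∀ x : ℕ →₀ ℝ, BddAbove {r | ∃ f ∈ K, r = pair f x})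
    (w m : ℝ) (hw : 1 ≤ w) (hm : 0 < m)
    (d : ℕ) (φl : Fin d → (ℕ →₀ ℝ)) (hφl : ∀ l, φl l ∈ K)
    (hφsucc : ∀ l l' : Fin d, l < l' →
      ∀ a ∈ (φl l).support, ∀ b ∈ (φl l').support, a < b)
    (φ : ℕ →₀ ℝ) (hφ : φ = w⁻¹ • ∑ l, φl l)
    (p : ℕ) (I : Fin p → Finset ℕ)
    (hI : ∀ i, ∃ a b, I i = Finset.Icc a b)
    (hIsucc : ∀ i i' : Fin p, i < i' → ∀ a ∈ I i, ∀ b ∈ I i', a < b)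
    (x : ℕ →₀ ℝ)
    (α : ℝ) (hα : α = m⁻¹ * ∑ i : Fin p, normK K (x.filter (· ∈ I i))) :
    |pair φ (m⁻¹ • ∑ i : Fin p, x.filter (· ∈ I i))| ≤
      ((d : ℝ) / m) * normK K x + w⁻¹ * α := by
  set xi : Fin p → ℕ →₀ ℝ := fun i => x.filter (· ∈ I i)
  have hK : K.Nonempty := ⟨_, hbasis 0⟩
  have hxi_le : ∀ i, normK K (xi i) ≤ normK K x := fun i => by
    obtain ⟨a, b, hab⟩ := hI i
    simpa only [xi, hab] using normK_filter_le hK (fun f hf => hrestr f hf a b) (hbdd x)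
  have hsum : ∑ i, ∑ l, |pair (φl l) (xi i)| ≤ ∑ i, normK K (xi i) + d * normK K x := by
    simpa using sum_sum_le_of_staircase _
      (fun i i' l l' h h' => le_of_pair_filter_ne_zero hφsucc hIsucc x
        (abs_ne_zero.1 h) (abs_ne_zero.1 h')) _ _
      (fun i l => abs_pair_le_normK hsym (hbdd _) (hφl l))
      (fun i => normK_nonneg hK hsym (hbdd _)) hxi_le (normK_nonneg hK hsym (hbdd x))
  have hw0 : 0 ≤ w⁻¹ := inv_nonneg.2 (zero_le_one.trans hw)
  rw [hφ, pair_smul_left, pair_smul_right, pair_sum_right, hα]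
  simp only [pair_sum_left, abs_mul, abs_of_nonneg hw0, abs_of_pos (inv_pos.2 hm)]
  calc w⁻¹ * (m⁻¹ * |∑ i, ∑ l, pair (φl l) (xi i)|)
      ≤ w⁻¹ * (m⁻¹ * (∑ i, normK K (xi i) + d * normK K x)) := by
        gcongr
        exact (abs_sum_le_sum_abs _ _).trans (sum_le_sum fun i _ => abs_sum_le_sum_abs _ _)
          |>.trans hsum
    _ = w⁻¹ * (d / m * normK K x) + w⁻¹ * (m⁻¹ * ∑ i, normK K (xi i)) := by ring
    _ ≤ d / m * normK K x + w⁻¹ * (m⁻¹ * ∑ i, normK K (xi i)) := by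
        have hx := normK_nonneg hK hsym (hbdd x)
        gcongr ?_ + _
        exact mul_le_of_le_one_left (by positivity) (inv_le_one_of_one_le₀ hw)
end

section
/- Let (θ_j) be a sequence of positive reals with Σ_{j=1}^∞ j·θ_j < ∞, let (a_n) be a sequence of nonnegative reals, and let (b_n) be a nonnegative sequence with the property: for every j, the set B_j = {n : θ_{j+1} < b_n ≤ θ_j} satisfies Σ_{n ∈ B_j, n ≥ j} a_n ≤ C and Σ_{n ∈ B_j, n < j} a_n ≤ (j-1)·C. Then Σ_{n=1}^∞ a_n b_n ≤ C · Σ_{j=1}^∞ j·θ_j, provided b_n ≤ θ_1 for all n. -/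
/-! Every `n` with `b n > 0` lies in some level `B_j` with `j ≥ 1` (the levels exhaust
`(0, θ 1]` because `θ j ≤ j θ j → 0`), and there `b n ≤ θ j`. The two hypotheses bound the
`a`-mass of each level by `C + (j - 1) C = j C`, so level `j` contributes at most
`C j θ j`; terms with `b n ≤ 0` contribute nothing positive. -/

open Finset Filter

theorem exists_level_of_le_of_lt {α : Type*} [LinearOrder α] {θ : ℕ → α} {x : α}
    (h1 : x ≤ θ 1) (hsmall : ∃ k, θ (k + 1) < x) :
    ∃ j, 1 ≤ j ∧ θ (j + 1) < x ∧ x ≤ θ j := by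
  classical
  obtain ⟨i, hi⟩ : ∃ i, Nat.find hsmall = i + 1 :=
    Nat.exists_eq_succ_of_ne_zero fun h0 => (h0 ▸ Nat.find_spec hsmall).not_ge h1
  refine ⟨i + 1, by omega, hi ▸ Nat.find_spec hsmall, ?_⟩
  exact not_lt.1 (Nat.find_min hsmall (hi ▸ Nat.lt_succ_self i))

theorem exists_lt_of_summable_natCast_mul {θ : ℕ → ℝ} (hθ : ∀ j, 1 ≤ j → 0 < θ j)
    (hsum : Summable fun j : ℕ => (j : ℝ) * θ j) {x : ℝ} (hx : 0 < x) :
    ∃ k, θ (k + 1) < x := by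
  obtain ⟨N, hN⟩ := eventually_atTop.1 (hsum.tendsto_atTop_zero.eventually (gt_mem_nhds hx))
  refine ⟨N, lt_of_le_of_lt ?_ (hN (N + 1) (Nat.le_succ N))⟩
  exact le_mul_of_one_le_left (hθ _ N.succ_pos).le (by simp)

theorem sum_mul_comp_le_sum_image {ι : Type*} [DecidableEq ι] (s : Finset ι) (g : ι → ℕ)
    (a : ι → ℝ) (w c : ℕ → ℝ) (hw : ∀ j ∈ s.image g, 0 ≤ w j)
    (hfiber : ∀ j ∈ s.image g, ∑ n ∈ s with g n = j, a n ≤ c j) :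
    ∑ n ∈ s, a n * w (g n) ≤ ∑ j ∈ s.image g, w j * c j := by
  rw [← sum_fiberwise_of_maps_to fun n hn => mem_image_of_mem g hn]
  refine sum_le_sum fun j hj => ?_
  calc ∑ n ∈ s with g n = j, a n * w (g n) = w j * ∑ n ∈ s with g n = j, a n := by
        rw [mul_sum]
        exact sum_congr rfl fun n hn => by rw [(mem_filter.1 hn).2, mul_comm]
    _ ≤ w j * c j := mul_le_mul_of_nonneg_left (hfiber j hj) (hw j hj)

theorem sum_le_natCast_mul_of_forall_mem_level {θ a b : ℕ → ℝ} {C : ℝ} {j : ℕ}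
    (hlevel1 : ∀ F : Finset ℕ,
      (∀ n ∈ F, θ (j + 1) < b n ∧ b n ≤ θ j ∧ j ≤ n) → ∑ n ∈ F, a n ≤ C)
    (hlevel2 : ∀ F : Finset ℕ,
      (∀ n ∈ F, θ (j + 1) < b n ∧ b n ≤ θ j ∧ n < j) →
        ∑ n ∈ F, a n ≤ ((j : ℝ) - 1) * C)
    {G : Finset ℕ} (hG : ∀ n ∈ G, θ (j + 1) < b n ∧ b n ≤ θ j) :
    ∑ n ∈ G, a n ≤ j * C := by
  rw [← sum_filter_add_sum_filter_not G (j ≤ ·)]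
  have hupper : ∑ n ∈ G with j ≤ n, a n ≤ C := hlevel1 _ fun n hn => by
    rw [mem_filter] at hn
    exact ⟨(hG n hn.1).1, (hG n hn.1).2, hn.2⟩
  have hlower : ∑ n ∈ G with ¬j ≤ n, a n ≤ ((j : ℝ) - 1) * C := hlevel2 _ fun n hn => by
    rw [mem_filter] at hn
    exact ⟨(hG n hn.1).1, (hG n hn.1).2, not_le.1 hn.2⟩
  linarith

theorem sum_le_sum_filter_of_nonpos {ι : Type*} (s : Finset ι) (f : ι → ℝ) (p : ι → Prop)
    [DecidablePred p] (hf : ∀ i ∈ s, ¬p i → f i ≤ 0) :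
    ∑ i ∈ s, f i ≤ ∑ i ∈ s with p i, f i := by
  rw [← sum_filter_add_sum_filter_not s p]
  exact add_le_of_nonpos_right <|
    sum_nonpos fun i hi => hf i (mem_filter.1 hi).1 (mem_filter.1 hi).2

theorem stmt17_general (θ a b : ℕ → ℝ) (C : ℝ) (hC : 0 ≤ C)
    (hθ : ∀ j, 1 ≤ j → 0 < θ j)
    (hsum : Summable (fun j : ℕ => (j : ℝ) * θ j))
    (ha : ∀ n, 0 ≤ a n) (hb1 : ∀ n, b n ≤ θ 1)
    (hlevel1 : ∀ j, 1 ≤ j → ∀ F : Finset ℕ,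
      (∀ n ∈ F, θ (j + 1) < b n ∧ b n ≤ θ j ∧ j ≤ n) → ∑ n ∈ F, a n ≤ C)
    (hlevel2 : ∀ j, 1 ≤ j → ∀ F : Finset ℕ,
      (∀ n ∈ F, θ (j + 1) < b n ∧ b n ≤ θ j ∧ n < j) →
        ∑ n ∈ F, a n ≤ ((j : ℝ) - 1) * C) :
    ∀ F : Finset ℕ, ∑ n ∈ F, a n * b n ≤ C * ∑' j : ℕ, (j : ℝ) * θ j := by
  classical
  intro F
  have hlevel (n : ℕ) (hbn : 0 < b n) : ∃ j, 1 ≤ j ∧ θ (j + 1) < b n ∧ b n ≤ θ j :=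
    exists_level_of_le_of_lt (hb1 n) (exists_lt_of_summable_natCast_mul hθ hsum hbn)
  choose! lev hlev using hlevel
  have hweight : ∀ j : ℕ, 0 ≤ (j : ℝ) * θ j := fun j =>
    j.eq_zero_or_pos.elim (fun h => by simp [h]) fun h => by have := hθ j h; positivity
  set P := F.filter (0 < b ·)
  have hP : ∀ n ∈ P, 1 ≤ lev n ∧ θ (lev n + 1) < b n ∧ b n ≤ θ (lev n) := fun n hn =>
    hlev n (mem_filter.1 hn).2
  calc ∑ n ∈ F, a n * b n ≤ ∑ n ∈ P, a n * b n :=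
        sum_le_sum_filter_of_nonpos F _ _ fun n _ hbn =>
          mul_nonpos_of_nonneg_of_nonpos (ha n) (not_lt.1 hbn)
    _ ≤ ∑ n ∈ P, a n * θ (lev n) := sum_le_sum fun n hn =>
        mul_le_mul_of_nonneg_left (hP n hn).2.2 (ha n)
    _ ≤ ∑ j ∈ P.image lev, θ j * (j * C) := by
        refine sum_mul_comp_le_sum_image P lev a θ _
          (forall_mem_image.2 fun n hn => (hθ _ (hP n hn).1).le)
          (forall_mem_image.2 fun m hm => ?_)
        refine sum_le_natCast_mul_of_forall_mem_level (hlevel1 _ (hP m hm).1)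
          (hlevel2 _ (hP m hm).1) fun n hn => ?_
        obtain ⟨hnP, hnm⟩ := mem_filter.1 hn
        exact hnm ▸ (hP n hnP).2
    _ = C * ∑ j ∈ P.image lev, (j : ℝ) * θ j := by
        rw [mul_sum]
        exact sum_congr rfl fun j _ => by ring
    _ ≤ C * ∑' j : ℕ, (j : ℝ) * θ j :=
        mul_le_mul_of_nonneg_left (hsum.sum_le_tsum _ fun j _ => hweight j) hC

/-- summation scheme of Proposition 3.2 / Lemma 3.6: Let
`(θ_j)_{j ≥ 1}` be positive reals with `Σ_j j θ_j < ∞`, let `(a_n)` be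
nonnegative reals and `(b_n)` nonnegative with `b_n ≤ θ_1` for all `n`, and
suppose that for every `j ≥ 1` the level set `B_j = {n : θ_{j+1} < b_n ≤ θ_j}`
satisfies `Σ_{n ∈ B_j, n ≥ j} a_n ≤ C` and `Σ_{n ∈ B_j, n < j} a_n ≤ (j-1) C`
(in the sense of finite partial sums).  Then
`Σ_n a_n b_n ≤ C Σ_j j θ_j`. -/
theorem stmt17 (θ a b : ℕ → ℝ) (C : ℝ) (hC : 0 ≤ C)
    (hθ : ∀ j, 1 ≤ j → 0 < θ j)
    (hsum : Summable (fun j : ℕ => (j : ℝ) * θ j))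
    (ha : ∀ n, 0 ≤ a n) (hb : ∀ n, 0 ≤ b n) (hb1 : ∀ n, b n ≤ θ 1)
    (hlevel1 : ∀ j, 1 ≤ j → ∀ F : Finset ℕ,
      (∀ n ∈ F, θ (j + 1) < b n ∧ b n ≤ θ j ∧ j ≤ n) → ∑ n ∈ F, a n ≤ C)
    (hlevel2 : ∀ j, 1 ≤ j → ∀ F : Finset ℕ,
      (∀ n ∈ F, θ (j + 1) < b n ∧ b n ≤ θ j ∧ n < j) →
        ∑ n ∈ F, a n ≤ ((j : ℝ) - 1) * C) :
    ∀ F : Finset ℕ, ∑ n ∈ F, a n * b n ≤ C * ∑' j : ℕ, (j : ℝ) * θ j :=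
  stmt17_general θ a b C hC hθ hsum ha hb1 hlevel1 hlevel2
end
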